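/- arXiv:math/0511363 — 6 statements merged into one kernel-verified Lean document; each statement's English description precedes it below -/
import Mathlib

section
/- Define L_0(x,y) = x, L_1(x,y) = y, and recursively L_i(x,y) = ⌊(1 + L_{i-2}(x,y))/L_{i-1}(x,y)⌋ · L_{i-1}(x,y) − L_{i-2}(x,y) for i ≥ 2. If q_j, q_{j+1}, q_{j+2}, ... are the denominators of consecutive Farey fractions of order Q starting at γ_j, then q_{j+i} = Q · L_i(q_j/Q, q_{j+1}/Q) for all i ≥ 0 (as long as γ_{j+i} exists). -/
/-- The Farey set of order `Q`: irreducible fractions in `[0,1]` with denominator `≤ Q`. -/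
def FareySet (Q : ℕ) : Set ℚ := {x | 0 ≤ x ∧ x ≤ 1 ∧ x.den ≤ Q}

/-- `x` and `y` are consecutive elements of the Farey sequence of order `Q`. -/
def FareyConsec (Q : ℕ) (x y : ℚ) : Prop :=
  x ∈ FareySet Q ∧ y ∈ FareySet Q ∧ x < y ∧ ∀ z ∈ FareySet Q, ¬(x < z ∧ z < y)

/-- The recursively defined functions `L_i`. -/
noncomputable def L : ℕ → ℝ × ℝ → ℝ
  | 0, p => p.1
  | 1, p => p.2
  | (n+2), p => ⌊(1 + L n p) / L (n+1) p⌋ * L (n+1) p - L n p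

/-- `k_i(x,y) = ⌊(1 + L_{i-1}(x,y)) / L_i(x,y)⌋`. -/
noncomputable def kk (i : ℕ) (p : ℝ × ℝ) : ℤ := ⌊(1 + L (i-1) p) / L i p⌋

/-- The Farey triangle. -/
def FareyTriangle : Set (ℝ × ℝ) := {p | 0 < p.1 ∧ p.1 ≤ 1 ∧ 1 < p.1 + p.2 ∧ p.2 ≤ 1}

lemma rat_coprime (x : ℚ) : IsCoprime x.num (x.den : ℤ) := by
  rw [Int.isCoprime_iff_gcd_eq_one]
  simpa [Int.gcd] using x.reduced

lemma den_div_le {p q : ℤ} (hq : 0 < q) : (((p : ℚ) / (q : ℚ)).den : ℤ) ≤ q := by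
  have h := Rat.den_dvd p q
  rw [Rat.divInt_eq_div] at h
  exact Int.le_of_dvd hq h

lemma farey_unimodular {Q : ℕ} (hQ : 0 < Q) {x y : ℚ} (h : FareyConsec Q x y) :
    y.num * x.den - x.num * y.den = 1 := by
  obtain ⟨⟨hx0, hx1, hxd⟩, ⟨hy0, hy1, hyd⟩, hxy, hno⟩ := h
  set a := x.num with ha
  set c := y.num with hc
  have hb0 : (0:ℤ) < x.den := by exact_mod_cast x.pos
  have hd0 : (0:ℤ) < y.den := by exact_mod_cast y.pos
  have hbQ : (x.den : ℤ) ≤ Q := by exact_mod_cast hxd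
  have hdQ : (y.den : ℤ) ≤ Q := by exact_mod_cast hyd
  -- Bezout for y
  obtain ⟨u, v, huv⟩ := rat_coprime y
  set d : ℤ := (y.den : ℤ) with hdd
  set b : ℤ := (x.den : ℤ) with hbb
  set q : ℤ := (Q : ℤ) - ((Q : ℤ) - u) % d with hq
  have hmod1 : 0 ≤ ((Q : ℤ) - u) % d := Int.emod_nonneg _ (by omega)
  have hmod2 : ((Q : ℤ) - u) % d < d := Int.emod_lt_of_pos _ hd0
  have hq2 : q ≤ (Q : ℤ) := by omega
  have hq1 : (Q : ℤ) - d < q := by omega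
  have hq0 : 0 < q := by omega
  have hdvd : d ∣ q * c - 1 := by
    have h1 : d ∣ q - u := by
      have : ((Q : ℤ) - u) % d = ((Q:ℤ) - u) - d * (((Q:ℤ) - u) / d) := by
        rw [Int.emod_def]
      refine ⟨(((Q:ℤ) - u) / d), by rw [hq, this]; ring⟩

    have h2 : q * c - 1 = (q - u) * c - v * d := by
      have : u * c = 1 - v * d := by linarith [huv]
      nlinarith [this]
    rw [h2]
    exact dvd_sub (h1.mul_right c) (dvd_mul_left d v)
  set p : ℤ := (q * c - 1) / d with hp
  have hpd : p * d = q * c - 1 := Int.ediv_mul_cancel hdvd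
  set r : ℚ := (p : ℚ) / (q : ℚ) with hr
  have hxeq : x = (a : ℚ) / (b : ℚ) := by
    rw [ha, hbb]; push_cast; exact (Rat.num_div_den x).symm
  have hyeq : y = (c : ℚ) / (d : ℚ) := by
    rw [hc, hdd]; push_cast; exact (Rat.num_div_den y).symm
  have hq0' : (0:ℚ) < (q:ℚ) := by exact_mod_cast hq0
  have hd0' : (0:ℚ) < (d:ℚ) := by exact_mod_cast hd0
  have hb0' : (0:ℚ) < (b:ℚ) := by exact_mod_cast hb0
  have hry : r < y := by
    rw [hr, hyeq, div_lt_div_iff₀ hq0' hd0']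
    have : p * d < c * q := by rw [hpd, mul_comm c q]; omega
    exact_mod_cast this
  have hcbad : 1 ≤ c * b - a * d := by
    have := hxy
    rw [hxeq, hyeq, div_lt_div_iff₀ hb0' hd0'] at this
    have : a * d < c * b := by exact_mod_cast this
    omega
  by_cases hrx : x < r
  · exfalso
    refine hno r ⟨le_of_lt (lt_of_le_of_lt hx0 hrx), le_of_lt (lt_of_lt_of_le hry hy1), ?_⟩
      ⟨hrx, hry⟩
    have := den_div_le (p := p) hq0
    rw [← hr] at this
    have : (r.den : ℤ) ≤ (Q : ℤ) := le_trans this hq2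
    exact_mod_cast this
  · push_neg at hrx
    rcases lt_or_eq_of_le hrx with hlt | heq
    · exfalso
      have h1 : p * b < a * q := by
        have := hlt
        rw [hr, hxeq, div_lt_div_iff₀ hq0' hb0'] at this
        exact_mod_cast this
      have key : b * (q * c - p * d) = q * (c * b - a * d) + d * (a * q - p * b) := by ring
      rw [hpd] at key
      have h2 : q * (c * b - a * d) ≥ q * 1 := by
        apply mul_le_mul_of_nonneg_left hcbad (le_of_lt hq0)
      have h3 : d * (a * q - p * b) ≥ d * 1 := by
        apply mul_le_mul_of_nonneg_left (by omega) (le_of_lt hd0)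
      have : b * (q * c - (q * c - 1)) = b := by ring
      omega
    · -- r = x
      have hpb : p * b = a * q := by
        have := heq
        rw [hr, hxeq, div_eq_div_iff hq0'.ne' hb0'.ne'] at this
        exact_mod_cast this
      have hbq : b ∣ q := by
        have h1 : b ∣ a * q := ⟨p, by linarith [hpb]⟩
        exact ((rat_coprime x).symm.dvd_of_dvd_mul_left h1)
      obtain ⟨t, ht⟩ := hbq
      have hpt : p = a * t := by
        have : p * b = (a * t) * b := by rw [hpb, ht]; ring
        exact mul_right_cancel₀ (by omega) this
      have ht1 : 1 ≤ t := by nlinarith [hq0, ht, hb0]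
      have hmul : (c * b - a * d) * t = 1 := by
        have : q * c - p * d = 1 := by omega
        rw [ht, hpt] at this; linear_combination this
      have hfin : c * b - a * d = 1 := by
        have hdvd1 : c * b - a * d ∣ 1 := ⟨t, hmul.symm⟩
        have := Int.le_of_dvd one_pos hdvd1
        omega
      rw [hc, ha, hbb, hdd] at hfin ⊢
      linarith

lemma farey_den_add {Q : ℕ} (hQ : 0 < Q) {y z : ℚ} (h : FareyConsec Q y z) :
    (Q : ℤ) < (y.den : ℤ) + z.den := by
  have huni := farey_unimodular hQ h
  obtain ⟨⟨hy0, hy1, hyd⟩, ⟨hz0, hz1, hzd⟩, hyz, hno⟩ := h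
  by_contra hcon
  push_neg at hcon
  set c := y.num; set e := z.num
  set d : ℤ := (y.den : ℤ) with hdd
  set f : ℤ := (z.den : ℤ) with hff
  have hd0 : (0:ℤ) < d := by rw [hdd]; exact_mod_cast y.pos
  have hf0 : (0:ℤ) < f := by rw [hff]; exact_mod_cast z.pos
  have hd0' : (0:ℚ) < (d:ℚ) := by exact_mod_cast hd0
  have hf0' : (0:ℚ) < (f:ℚ) := by exact_mod_cast hf0
  have hdf0' : (0:ℚ) < ((d + f : ℤ):ℚ) := by push_cast; linarith
  set w : ℚ := ((c + e : ℤ) : ℚ) / ((d + f : ℤ) : ℚ) with hw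
  have hyeq : y = (c : ℚ) / (d : ℚ) := by push_cast; exact (Rat.num_div_den y).symm
  have hzeq : z = (e : ℚ) / (f : ℚ) := by push_cast; exact (Rat.num_div_den z).symm
  have hyw : y < w := by
    rw [hw, hyeq, div_lt_div_iff₀ hd0' hdf0']
    have : c * (d + f) < (c + e) * d := by nlinarith [huni]
    exact_mod_cast this
  have hwz : w < z := by
    rw [hw, hzeq, div_lt_div_iff₀ hdf0' hf0']
    have : (c + e) * f < e * (d + f) := by nlinarith [huni]
    exact_mod_cast this
  refine hno w ⟨le_of_lt (lt_of_le_of_lt hy0 hyw), le_of_lt (lt_of_lt_of_le hwz hz1), ?_⟩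
    ⟨hyw, hwz⟩
  have h1 := den_div_le (p := c + e) (q := d + f) (by omega)
  rw [← hw] at h1
  have : (w.den : ℤ) ≤ (Q : ℤ) := by omega
  exact_mod_cast this

lemma farey_next_den {Q : ℕ} (hQ : 0 < Q) {x y z : ℚ} (hxy : FareyConsec Q x y)
    (hyz : FareyConsec Q y z) :
    ∃ k : ℤ, (z.den : ℤ) + x.den = k * y.den ∧ k * y.den ≤ (Q : ℤ) + x.den ∧
      (Q : ℤ) + x.den < (k + 1) * y.den := by
  have h1 := farey_unimodular hQ hxy
  have h2 := farey_unimodular hQ hyz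
  have h3 := farey_den_add hQ hyz
  set a := x.num; set c := y.num; set e := z.num
  set b : ℤ := (x.den : ℤ) with hbb
  set d : ℤ := (y.den : ℤ) with hdd
  set f : ℤ := (z.den : ℤ) with hff
  have hfQ : f ≤ (Q : ℤ) := by rw [hff]; exact_mod_cast hyz.2.1.2.2
  have hdvd : d ∣ f + b := by
    have hcd : d ∣ c * (f + b) := ⟨e + a, by nlinarith [h1, h2]⟩
    exact ((rat_coprime y).symm.dvd_of_dvd_mul_left hcd)
  obtain ⟨k, hk⟩ := hdvd
  have hk' : f + b = k * d := by rw [hk]; ring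
  refine ⟨k, by omega, by omega, by nlinarith [hk', h3]⟩

/-- If `q_j, q_{j+1}, q_{j+2}, …` are the denominators of consecutive Farey fractions of order
`Q` starting at `γ_j`, then `q_{j+i} = Q · L_i(q_j/Q, q_{j+1}/Q)` for all `i ≥ 0`. -/
theorem stmt5 (Q : ℕ) (hQ : 0 < Q) (m : ℕ) (γ : ℕ → ℚ)
    (hcons : ∀ i, i + 1 ≤ m → FareyConsec Q (γ i) (γ (i + 1))) :
    ∀ i ≤ m, ((γ i).den : ℝ) =
      (Q : ℝ) * L i (((γ 0).den : ℝ) / (Q : ℝ), ((γ 1).den : ℝ) / (Q : ℝ)) := by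
  have hQ0 : (0:ℝ) < (Q:ℝ) := by exact_mod_cast hQ
  set p : ℝ × ℝ := (((γ 0).den : ℝ) / (Q : ℝ), ((γ 1).den : ℝ) / (Q : ℝ)) with hp
  intro i
  induction i using Nat.twoStepInduction with
  | zero =>
    intro _
    show ((γ 0).den : ℝ) = (Q:ℝ) * (((γ 0).den : ℝ) / (Q : ℝ))
    field_simp
  | one =>
    intro _
    show ((γ 1).den : ℝ) = (Q:ℝ) * (((γ 1).den : ℝ) / (Q : ℝ))
    field_simp
  | more n ih1 ih2 =>
    intro hn
    have hn1 : n + 1 ≤ m := by omega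
    have hn0 : n ≤ m := by omega
    have e1 := ih1 hn0
    have e2 := ih2 hn1
    obtain ⟨k, hk1, hk2, hk3⟩ := farey_next_den hQ (hcons n hn1) (hcons (n+1) hn)
    set b : ℤ := ((γ n).den : ℤ) with hbb
    set d : ℤ := ((γ (n+1)).den : ℤ) with hdd
    set f : ℤ := ((γ (n+2)).den : ℤ) with hff
    have hd0 : (0:ℤ) < d := by rw [hdd]; exact_mod_cast (γ (n+1)).pos
    have hd0' : (0:ℝ) < (d:ℝ) := by exact_mod_cast hd0
    have hLn : L n p = (b : ℝ) / (Q : ℝ) := by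
      rw [hbb]; push_cast
      rw [eq_div_iff (ne_of_gt hQ0), mul_comm]
      exact e1.symm
    have hLn1 : L (n+1) p = (d : ℝ) / (Q : ℝ) := by
      rw [hdd]; push_cast
      rw [eq_div_iff (ne_of_gt hQ0), mul_comm]
      exact e2.symm
    have hfloor : ⌊(1 + L n p) / L (n+1) p⌋ = k := by
      rw [hLn, hLn1]
      have harg : (1 + (b:ℝ) / (Q:ℝ)) / ((d:ℝ) / (Q:ℝ)) = ((Q:ℝ) + b) / d := by
        field_simp
      rw [harg, Int.floor_eq_iff]
      constructor
      · rw [le_div_iff₀ hd0']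
        have : (k * d : ℤ) ≤ ((Q:ℤ) + b) := hk2
        exact_mod_cast this
      · rw [div_lt_iff₀ hd0']
        have : ((Q:ℤ) + b) < (k+1) * d := hk3
        exact_mod_cast this
    show ((γ (n+2)).den : ℝ) = (Q:ℝ) * (⌊(1 + L n p) / L (n+1) p⌋ * L (n+1) p - L n p)
    rw [hfloor, hLn, hLn1]
    have : (f : ℝ) = k * d - b := by
      have : f = k * d - b := by omega
      exact_mod_cast this
    rw [hff] at this
    push_cast at this ⊢
    rw [this]
    field_simp
end

section
/- Let T = {(x,y) : 0 < x ≤ 1, x + y > 1, y ≤ 1} be the Farey triangle and define L_0(x,y)=x, L_1(x,y)=y, L_i = ⌊(1+L_{i-2})/L_{i-1}⌋·L_{i-1} − L_{i-2}, and k_i(x,y) = ⌊(1+L_{i-1}(x,y))/L_i(x,y)⌋. Then for all (x,y) ∈ T and all i ≥ 1, L_i(x,y) > 0 and k_i(x,y) ≥ 1. -/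
lemma L_aux (p : ℝ × ℝ) (hp : p ∈ FareyTriangle) :
    ∀ n : ℕ, 0 < L (n+1) p ∧ L (n+1) p ≤ 1 ∧ 1 < L n p + L (n+1) p := by
  obtain ⟨hx, hx1, hxy, hy1⟩ := hp
  intro n
  induction n with
  | zero =>
    refine ⟨?_, hy1, by simpa [L] using hxy⟩
    show (0:ℝ) < p.2
    nlinarith
  | succ n ih =>
    obtain ⟨hb, hb1, hab⟩ := ih
    set a := L n p with ha
    set b := L (n+1) p with hbdef
    have hL : L (n+2) p = ⌊(1 + a) / b⌋ * b - a := by rw [L]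
    have hfl : ((1 + a) / b - 1) < (⌊(1 + a) / b⌋ : ℝ) := by
      have := Int.sub_one_lt_floor ((1 + a) / b)
      linarith
    have hfu : (⌊(1 + a) / b⌋ : ℝ) ≤ (1 + a) / b := Int.floor_le _
    have h1 : (1 + a) - b < (⌊(1 + a) / b⌋ : ℝ) * b := by
      have := mul_lt_mul_of_pos_right hfl hb
      rw [sub_mul, div_mul_cancel₀ _ (ne_of_gt hb)] at this
      linarith
    have h2 : (⌊(1 + a) / b⌋ : ℝ) * b ≤ 1 + a := by
      have := mul_le_mul_of_nonneg_right hfu hb.le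
      rwa [div_mul_cancel₀ _ (ne_of_gt hb)] at this
    refine ⟨by rw [hL]; linarith, by rw [hL]; linarith, by rw [hL]; linarith⟩

/-- On the Farey triangle, `L_i(x,y) > 0` and `k_i(x,y) ≥ 1` for all `i ≥ 1`. -/
theorem stmt6 (p : ℝ × ℝ) (hp : p ∈ FareyTriangle) (i : ℕ) (hi : 1 ≤ i) :
    0 < L i p ∧ 1 ≤ kk i p := by
  obtain ⟨m, rfl⟩ := Nat.exists_eq_add_of_le hi
  obtain ⟨hb, hb1, hab⟩ := L_aux p hp m
  have hm : 1 + m - 1 = m := by omega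
  have ha : 0 < L m p := by
    rcases m with _ | m
    · exact hp.1
    · obtain ⟨hb', _, _⟩ := L_aux p hp m
      exact hb'
  have heq : (1 : ℕ) + m = m + 1 := Nat.add_comm 1 m
  rw [heq] at *
  refine ⟨hb, ?_⟩
  unfold kk
  have : (1 + m : ℕ) - 1 = m := by omega
  rw [show (m + 1 : ℕ) - 1 = m from by omega]
  rw [Int.le_floor]
  push_cast
  rw [le_div_iff₀ hb]
  linarith
end

section
/- With T the Farey triangle {(x,y) : 0 < x ≤ 1, x + y > 1, y ≤ 1} and L_i, k_i defined by the Farey recursion, one has L_{i-1}(x,y) + L_i(x,y) > 1 and L_i(x,y) ≤ 1 for every (x,y) ∈ T and every i ≥ 1; i.e., the map (x,y) ↦ (L_i(x,y), L_{i+1}(x,y)) maps T into T. -/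
lemma farey_step (a b : ℝ) (h : (a, b) ∈ FareyTriangle) :
    ((b, (⌊(1 + a) / b⌋ : ℝ) * b - a) : ℝ × ℝ) ∈ FareyTriangle := by
  obtain ⟨ha, ha1, hab, hb1⟩ := h
  simp only [FareyTriangle, Set.mem_setOf_eq] at *
  have hb : 0 < b := by linarith
  have h1 : (⌊(1 + a) / b⌋ : ℝ) ≤ (1 + a) / b := Int.floor_le _
  have h2 : (1 + a) / b - 1 < (⌊(1 + a) / b⌋ : ℝ) := Int.sub_one_lt_floor _
  have h3 : (⌊(1 + a) / b⌋ : ℝ) * b ≤ 1 + a := by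
    calc (⌊(1 + a) / b⌋ : ℝ) * b ≤ ((1 + a) / b) * b := by
          exact mul_le_mul_of_nonneg_right h1 hb.le
      _ = 1 + a := by field_simp
  have h4 : 1 + a - b < (⌊(1 + a) / b⌋ : ℝ) * b := by
    have := mul_lt_mul_of_pos_right h2 hb
    have e : ((1 + a) / b - 1) * b = 1 + a - b := by field_simp
    linarith [e ▸ this]
  exact ⟨hb, hb1, by linarith, by linarith⟩

lemma farey_aux (p : ℝ × ℝ) (hp : p ∈ FareyTriangle) (i : ℕ) :
    ((L i p, L (i + 1) p) : ℝ × ℝ) ∈ FareyTriangle := by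
  induction i using Nat.twoStepInduction with
  | zero => simpa [L] using hp
  | one =>
    have := farey_step p.1 p.2 (by simpa using hp)
    simpa [L] using this
  | more n ih1 ih2 =>
    have := farey_step (L (n+1) p) (L (n+2) p) ih2
    simpa [L] using this

/-- On the Farey triangle, `L_{i-1} + L_i > 1` and `L_i ≤ 1` for every `i ≥ 1`; that is,
`(x,y) ↦ (L_i(x,y), L_{i+1}(x,y))` maps the Farey triangle into itself. -/
theorem stmt7 (p : ℝ × ℝ) (hp : p ∈ FareyTriangle) (i : ℕ) (hi : 1 ≤ i) :
    1 < L (i - 1) p + L i p ∧ L i p ≤ 1 ∧ (L i p, L (i + 1) p) ∈ FareyTriangle := by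
  obtain ⟨j, rfl⟩ := Nat.exists_eq_add_of_le hi
  simp only [Nat.add_sub_cancel_left] at *
  have h1 := farey_aux p hp j
  have h2 := farey_aux p hp (j + 1)
  obtain ⟨a1, a2, a3, a4⟩ := h1
  have e : 1 + j = j + 1 := by ring
  rw [e]
  exact ⟨a3, a4, h2⟩
end

section
/- With T_{k,l} as the set of points (x,y) in the Farey triangle with k_1(x,y) = k and k_2(x,y) = l, if k ≥ 2 and l ≥ 2 and (k,l) is not one of (2,2), (2,3), (2,4), (3,2), (4,2), then T_{k,l} is empty. -/
/-- `k_1(x,y) = ⌊(1+x)/y⌋`. -/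
noncomputable def k1 (p : ℝ × ℝ) : ℤ := ⌊(1 + p.1) / p.2⌋

/-- `L_2(x,y) = k_1(x,y)·y − x`. -/
noncomputable def L2 (p : ℝ × ℝ) : ℝ := k1 p * p.2 - p.1

/-- `k_2(x,y) = ⌊(1+y)/L_2(x,y)⌋`. -/
noncomputable def k2 (p : ℝ × ℝ) : ℤ := ⌊(1 + p.2) / L2 p⌋

/-- The polygon `T_k`. -/
noncomputable def Tk (k : ℤ) : Set (ℝ × ℝ) := {p ∈ FareyTriangle | k1 p = k}

/-- The polygon `T_{k,l}`. -/
noncomputable def Tkl (k l : ℤ) : Set (ℝ × ℝ) := {p ∈ FareyTriangle | k1 p = k ∧ k2 p = l}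

/-- If `k ≥ 2`, `l ≥ 2` and `(k,l)` is none of `(2,2), (2,3), (2,4), (3,2), (4,2)`,
then `T_{k,l}` is empty. -/
theorem stmt9 (k l : ℤ) (hk : 2 ≤ k) (hl : 2 ≤ l)
    (h : (k, l) ∉ ({(2, 2), (2, 3), (2, 4), (3, 2), (4, 2)} : Set (ℤ × ℤ))) :
    Tkl k l = ∅ := by
  ext p
  simp only [Tkl, FareyTriangle, Set.mem_setOf_eq, Set.mem_empty_iff_false, iff_false, not_and]
  rintro ⟨hx0, hx1, hxy, hy1⟩ hk1 hk2
  apply h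
  set x := p.1 with hxdef
  set y := p.2 with hydef
  have hy0 : 0 < y := by linarith
  have hkR : (2:ℝ) ≤ (k:ℝ) := by exact_mod_cast hk
  have hlR : (2:ℝ) ≤ (l:ℝ) := by exact_mod_cast hl
  -- floor facts for k1
  have h1 : (k:ℝ) * y ≤ 1 + x := by
    have := Int.floor_le ((1 + x) / y)
    rw [show ⌊(1 + x) / y⌋ = k from hk1] at this
    calc (k:ℝ) * y ≤ ((1 + x) / y) * y := by nlinarith
    _ = 1 + x := by field_simp
  have h2 : 1 + x < ((k:ℝ) + 1) * y := by
    have := Int.lt_floor_add_one ((1 + x) / y)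
    rw [show ⌊(1 + x) / y⌋ = k from hk1] at this
    calc 1 + x = ((1 + x) / y) * y := by field_simp
    _ < ((k:ℝ) + 1) * y := by nlinarith
  -- L2 facts
  have hL2 : L2 p = (k:ℝ) * y - x := by
    simp only [L2, ← hxdef, ← hydef, hk1]
  have hL2gt : 1 - y < L2 p := by rw [hL2]; nlinarith
  have hL2ge : (k:ℝ) * y - 1 ≤ L2 p := by rw [hL2]; linarith
  have hL2pos : 0 < L2 p := by nlinarith
  -- floor fact for k2
  have h3 : (l:ℝ) * L2 p ≤ 1 + y := by
    have := Int.floor_le ((1 + y) / L2 p)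
    rw [show ⌊(1 + y) / L2 p⌋ = l from hk2] at this
    calc (l:ℝ) * L2 p ≤ ((1 + y) / L2 p) * L2 p := by nlinarith
    _ = 1 + y := by field_simp
  -- derive the key inequalities
  have hyl : (l:ℝ) - 1 < y * ((l:ℝ) + 1) := by nlinarith
  have hyu : y * ((k:ℝ) * l - 1) ≤ (l:ℝ) + 1 := by nlinarith
  have hklpos : (0:ℝ) < (k:ℝ) * l - 1 := by nlinarith
  have key : (k:ℝ) * ((l:ℝ) - 1) < (l:ℝ) + 3 := by nlinarith
  have keyZ : k * (l - 1) ≤ l + 2 := by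
    have : (k:ℝ) * ((l:ℝ) - 1) < (l:ℝ) + 3 := key
    have h' : k * (l - 1) < l + 3 := by exact_mod_cast (by push_cast; linarith : ((k * (l-1) : ℤ) : ℝ) < ((l + 3 : ℤ) : ℝ))
    omega
  have hl4 : l ≤ 4 := by nlinarith
  simp only [Set.mem_insert_iff, Set.mem_singleton_iff, Prod.mk.injEq]
  interval_cases l <;> omega
end

section
/- For positive integers k, l with kl > 1, the set T_{k,l} = {(x,y) ∈ T : k_1(x,y) = k, k_2(x,y) = l} equals {(x,y) ∈ T_k : (1+(l+1)x)/(k(l+1)−1) < y ≤ (1+lx)/(kl−1)}, where T_k = {(x,y) ∈ T : k_1(x,y) = k}. -/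
/-!
On `T_k` we have `L_2 = k y - x > 0`, so `k_2 = l` means `l (k y - x) ≤ 1 + y < (l + 1) (k y - x)`.
Both inequalities are linear in `y`; solving them for `y` gives the two bounds, the denominators
`k l - 1` and `k (l + 1) - 1` being positive.
-/

namespace FareyTriangle

variable {p : ℝ × ℝ}

lemma snd_pos (hp : p ∈ FareyTriangle) : 0 < p.2 := by
  obtain ⟨-, hx1, hxy, -⟩ := hp
  linarith

/-- `k_1 > (1 + x)/y - 1` gives `L_2 > 1 - y ≥ 0`. -/
lemma L2_pos (hp : p ∈ FareyTriangle) : 0 < L2 p := by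
  have hy := snd_pos hp
  obtain ⟨-, -, -, hy1⟩ := hp
  have hk1 : (1 + p.1) / p.2 < k1 p + 1 := Int.lt_floor_add_one _
  rw [div_lt_iff₀ hy] at hk1
  rw [L2]
  linarith

lemma k2_eq_iff (hp : p ∈ FareyTriangle) (l : ℤ) :
    k2 p = l ↔ l * L2 p ≤ 1 + p.2 ∧ 1 + p.2 < (l + 1) * L2 p := by
  rw [k2, Int.floor_eq_iff, le_div_iff₀ (L2_pos hp), div_lt_iff₀ (L2_pos hp)]

end FareyTriangle

theorem stmt11_general (k l : ℤ) (hk : 1 ≤ k) (hkl : 1 < k * l) :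
    Tkl k l = {p ∈ Tk k |
      (1 + ((l : ℝ) + 1) * p.1) / ((k : ℝ) * ((l : ℝ) + 1) - 1) < p.2 ∧
        p.2 ≤ (1 + (l : ℝ) * p.1) / ((k : ℝ) * (l : ℝ) - 1)} := by
  have hkR : (1 : ℝ) ≤ k := by exact_mod_cast hk
  have hklR : (1 : ℝ) < k * l := by exact_mod_cast hkl
  ext p
  simp only [Tkl, Tk, Set.mem_ofPred_eq, and_assoc]
  refine and_congr_right fun hp => and_congr_right fun hk1 => ?_
  rw [FareyTriangle.k2_eq_iff hp, L2, hk1, div_lt_iff₀ (by linarith), le_div_iff₀ (by linarith),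
    and_comm]
  constructor <;> rintro ⟨h₁, h₂⟩ <;> constructor <;> linarith

/-- For positive integers `k, l` with `kl > 1`,
`T_{k,l} = {(x,y) ∈ T_k : (1+(l+1)x)/(k(l+1)−1) < y ≤ (1+lx)/(kl−1)}`. -/
theorem stmt11 (k l : ℤ) (hk : 1 ≤ k) (hl : 1 ≤ l) (hkl : 1 < k * l) :
    Tkl k l = {p ∈ Tk k |
      (1 + ((l : ℝ) + 1) * p.1) / ((k : ℝ) * ((l : ℝ) + 1) - 1) < p.2 ∧
        p.2 ≤ (1 + (l : ℝ) * p.1) / ((k : ℝ) * (l : ℝ) - 1)} :=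
  stmt11_general k l hk hkl
end

section
/- For the 2-level statistic with h = 1, the support of the limiting measure μ_{2,1} of normalized gaps γ_{j+2} − γ_j is exactly [6/π², ∞); equivalently, the function (x,y) ↦ (3/π²)·k_1(x,y)/(x·L_2(x,y)) on the Farey triangle T has range whose closure equals [6/π², ∞). -/
/-- The closure of the range of `(x,y) ↦ (3/π²)·k_1(x,y)/(x·L_2(x,y))` on the Farey triangle
is exactly `[6/π², ∞)`. -/
theorem stmt18 :
    closure {t : ℝ | ∃ p ∈ FareyTriangle,
        t = 3 / Real.pi ^ 2 * ((k1 p : ℝ) / (p.1 * L2 p))} =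
      Set.Ici (6 / Real.pi ^ 2) := by
  have hπ : (0:ℝ) < Real.pi ^ 2 := by positivity
  have hπne : (Real.pi:ℝ) ^ 2 ≠ 0 := ne_of_gt hπ
  have hset : {t : ℝ | ∃ p ∈ FareyTriangle,
        t = 3 / Real.pi ^ 2 * ((k1 p : ℝ) / (p.1 * L2 p))} = Set.Ici (6 / Real.pi ^ 2) := by
    ext t
    simp only [Set.mem_setOf_eq, Set.mem_Ici]
    constructor
    · rintro ⟨p, ⟨hx, hx1, hxy, hy⟩, rfl⟩
      set x := p.1 with hxdef
      set y := p.2 with hydef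
      have hy0 : 0 < y := by linarith
      have hk_le : (k1 p : ℝ) * y ≤ 1 + x := by
        have := Int.floor_le ((1 + x) / y)
        rw [le_div_iff₀ hy0] at this
        exact this
      have hk_lt : 1 + x < ((k1 p : ℝ) + 1) * y := by
        have h := Int.lt_floor_add_one ((1 + x) / y)
        rw [div_lt_iff₀ hy0] at h
        exact h
      have hk1 : (1:ℤ) ≤ k1 p := by
        apply Int.le_floor.mpr
        rw [le_div_iff₀ hy0]
        push_cast
        linarith
      have hk1' : (1:ℝ) ≤ (k1 p : ℝ) := by exact_mod_cast hk1
      have hL2pos : 0 < L2 p := by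
        have : (1:ℝ) - y ≤ (k1 p : ℝ) * y - x := by nlinarith
        have h2 : L2 p = (k1 p : ℝ) * y - x := rfl
        nlinarith
      have hL2le : L2 p ≤ 1 := by
        have h2 : L2 p = (k1 p : ℝ) * y - x := rfl
        nlinarith
      have h2 : 2 ≤ (k1 p : ℝ) / (x * L2 p) := by
        rw [le_div_iff₀ (by positivity)]
        by_cases hk2 : (2:ℤ) ≤ k1 p
        · have hk2' : (2:ℝ) ≤ (k1 p : ℝ) := by exact_mod_cast hk2
          nlinarith
        · have hkeq : k1 p = 1 := le_antisymm (by omega) hk1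
          have hkeq' : (k1 p : ℝ) = 1 := by exact_mod_cast hkeq
          rw [hkeq'] at hk_lt ⊢
          have hL2eq : L2 p = y - x := by
            simp [L2, hkeq, ← hxdef, ← hydef]
          rw [hL2eq]
          nlinarith [mul_nonneg hx.le (by linarith : (0:ℝ) ≤ 1 - y), sq_nonneg (1 - 2*x)]
      calc 6 / Real.pi ^ 2 = 3 / Real.pi ^ 2 * 2 := by ring
        _ ≤ 3 / Real.pi ^ 2 * ((k1 p : ℝ) / (x * L2 p)) := by
            apply mul_le_mul_of_nonneg_left h2 (by positivity)
    · intro ht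
      set c : ℝ := t * Real.pi ^ 2 / 3 with hcdef
      have h6 : 6 ≤ t * Real.pi ^ 2 := by
        have := mul_le_mul_of_nonneg_right ht hπ.le
        rwa [div_mul_cancel₀] at this
        exact hπne
      have hc2 : 2 ≤ c := by rw [hcdef]; linarith
      have hc0 : 0 < c := by linarith
      have htc : t = 3 / Real.pi ^ 2 * c := by
        rw [hcdef]; field_simp
      by_cases hc6 : c < 6
      · -- family x = 1, k1 = 2
        refine ⟨(1, (c+2)/(2*c)), ⟨by norm_num, le_refl 1, ?_, ?_⟩, ?_⟩
        · simp only
          have : 0 < (c+2)/(2*c) := by positivity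
          linarith
        · simp only
          rw [div_le_one (by positivity)]
          linarith
        · have hk : k1 (1, (c+2)/(2*c)) = 2 := by
            rw [k1]
            have hval : (1 + (1:ℝ)) / ((c+2)/(2*c)) = 4*c/(c+2) := by
              field_simp
              ring
            show ⌊(1 + (1:ℝ)) / ((c+2)/(2*c))⌋ = 2
            rw [hval, Int.floor_eq_iff]
            constructor
            · rw [le_div_iff₀ (by linarith)]
              push_cast
              linarith
            · rw [div_lt_iff₀ (by linarith)]
              push_cast
              linarith
          have hL : L2 (1, (c+2)/(2*c)) = 2/c := by
            rw [L2, hk]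
            push_cast
            field_simp
            ring
          rw [hk, hL, htc]
          push_cast
          congr 1
          field_simp
      · -- family y = 1, k1 = 1
        push_neg at hc6
        set s : ℝ := Real.sqrt (1 - 4/c) with hsdef
        have h4c : 4/c < 1 := by
          rw [div_lt_one hc0]; linarith
        have hs_nonneg : 0 ≤ s := Real.sqrt_nonneg _
        have hs2 : s^2 = 1 - 4/c := Real.sq_sqrt (by linarith)
        have hs_lt : s < 1 := by
          nlinarith [div_pos (by norm_num : (0:ℝ) < 4) hc0]
        set x : ℝ := (1 - s)/2 with hxdef
        have hx0 : 0 < x := by rw [hxdef]; linarith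
        have hxh : x ≤ 1/2 := by rw [hxdef]; linarith
        refine ⟨(x, 1), ⟨hx0, by linarith, by simpa using hx0, le_refl 1⟩, ?_⟩
        have hk : k1 (x, 1) = 1 := by
          rw [k1]
          simp only [div_one]
          rw [Int.floor_eq_iff]
          constructor
          · push_cast; linarith
          · push_cast; linarith
        have hL : L2 (x, 1) = 1 - x := by
          rw [L2, hk]; push_cast; ring
        have hxx : x * (1 - x) = 1/c := by
          rw [hxdef]
          have : (1 - s)/2 * (1 - (1 - s)/2) = (1 - s^2)/4 := by ring
          rw [this, hs2]
          field_simp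
          ring
        rw [hk, hL, htc]
        push_cast
        rw [hxx]
        congr 1
        field_simp
  rw [hset, IsClosed.closure_eq isClosed_Ici]
end
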